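/- First GKS inequality: for a generalized Ising model with all couplings J_R ≥ 0 on a finite spin set Λ, every correlation ⟨σ_A⟩ is nonnegative: ⟨σ_A⟩ ≥ 0 for all A ⊆ Λ. -/

import Mathlib

variable {Λ : Type*}

/-- The value `±1` of the spin at site `j` in configuration `s`. -/
def spin (s : Λ → Bool) (j : Λ) : ℝ := if s j then 1 else -1

/-- The product `σ_A = ∏_{j ∈ A} σ_j` of the spins in `A`. -/
def spinProd (A : Finset Λ) (s : Λ → Bool) : ℝ := ∏ j ∈ A, spin s j

variable [Fintype Λ] [DecidableEq Λ]

/-- Generalized Ising Hamiltonian `H(σ) = -Σ_R J_R σ_R` with couplings `J`. -/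
def isingHamiltonian (J : Finset Λ → ℝ) (s : Λ → Bool) : ℝ :=
  -∑ R : Finset Λ, J R * spinProd R s

/-- Gibbs (thermal) expectation `⟨f⟩ = Σ_σ f(σ) e^{-βH(σ)} / Σ_σ e^{-βH(σ)}`. -/
noncomputable def gibbsExpect (β : ℝ) (J : Finset Λ → ℝ) (f : (Λ → Bool) → ℝ) : ℝ :=
  (∑ s : Λ → Bool, f s * Real.exp (-β * isingHamiltonian J s)) /
    ∑ s : Λ → Bool, Real.exp (-β * isingHamiltonian J s)

/-!
Nonnegative combinations of the spin products `σ_B` are closed under multiplication, since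
`σ_A σ_B = σ_{A ∆ B}`. As `exp (x σ_R) = cosh x + sinh x · σ_R` with `cosh x, sinh x ≥ 0` for
`x ≥ 0`, the Boltzmann weight `∏_R exp (β J_R σ_R)`, and hence `σ_A` times it, is such a combination.
Summing over configurations annihilates every `σ_B` with `B ≠ ∅` and leaves a nonnegative constant,
so the numerator of `⟨σ_A⟩` is nonnegative.
-/

open scoped NNReal symmDiff

section Spins

variable {Λ : Type*}

lemma spin_mul_self (s : Λ → Bool) (j : Λ) : spin s j * spin s j = 1 := by
  unfold spin; split <;> norm_num

lemma spinProd_eq_one_or_neg_one (A : Finset Λ) (s : Λ → Bool) :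
    spinProd A s = 1 ∨ spinProd A s = -1 :=
  Finset.prod_induction _ (fun x : ℝ => x = 1 ∨ x = -1)
    (by rintro a b (rfl | rfl) (rfl | rfl) <;> norm_num) (Or.inl rfl)
    (fun j _ => by unfold spin; split <;> simp)

lemma spinProd_empty : spinProd (∅ : Finset Λ) = 1 := by
  funext s; simp [spinProd]

lemma spinProd_mul_spinProd [DecidableEq Λ] (A B : Finset Λ) :
    spinProd A * spinProd B = spinProd (A ∆ B) := by
  funext s
  have hsquare : ∏ j ∈ A ∩ B, spin s j * spin s j = 1 :=
    Finset.prod_eq_one fun j _ => spin_mul_self s j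
  calc spinProd A s * spinProd B s
      = (∏ j ∈ A ∪ B, spin s j) * ∏ j ∈ A ∩ B, spin s j := Finset.prod_union_inter.symm
    _ = (∏ j ∈ (A ∪ B) \ (A ∩ B), spin s j) * ∏ j ∈ A ∩ B, spin s j * spin s j := by
      rw [← Finset.prod_sdiff Finset.inter_subset_union, mul_assoc, Finset.prod_mul_distrib]
    _ = spinProd (A ∆ B) s := by
      rw [hsquare, mul_one, symmDiff_eq_sup_sdiff_inf]
      rfl

lemma exp_mul_spinProd (x : ℝ) (A : Finset Λ) (s : Λ → Bool) :
    Real.exp (x * spinProd A s) = Real.cosh x + Real.sinh x * spinProd A s := by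
  rcases spinProd_eq_one_or_neg_one A s with h | h <;> rw [h]
  · rw [mul_one, mul_one, Real.cosh_add_sinh]
  · rw [mul_neg_one, mul_neg_one, ← sub_eq_add_neg, Real.cosh_sub_sinh]

/-- Each site contributes a factor `∑_{σ_j = ±1} σ_j = 0` if it lies in `A`, and `2` otherwise. -/
lemma sum_spinProd_nonneg [Fintype Λ] [DecidableEq Λ] (A : Finset Λ) :
    0 ≤ ∑ s : Λ → Bool, spinProd A s := by
  have hsite : ∀ s : Λ → Bool, spinProd A s = ∏ j, if j ∈ A then spin s j else 1 := fun s => by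
    rw [Finset.prod_ite_mem, Finset.univ_inter, spinProd]
  simp_rw [hsite, spin]
  rw [← Fintype.prod_sum (fun j (b : Bool) => if j ∈ A then (if b then 1 else -1 : ℝ) else 1)]
  refine Finset.prod_nonneg fun j _ => ?_
  split_ifs <;> simp

/-- Nonnegative combinations of the `σ_B`; a semiring because `σ_A σ_B = σ_{A ∆ B}`. -/
def nonnegSpinAlgebra : Subalgebra ℝ≥0 ((Λ → Bool) → ℝ) :=
  Algebra.adjoin ℝ≥0 (Set.range spinProd)

lemma mem_range_spinProd_of_mem_closure [DecidableEq Λ] {f : (Λ → Bool) → ℝ}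
    (hf : f ∈ Submonoid.closure (Set.range (spinProd (Λ := Λ)))) : f ∈ Set.range spinProd := by
  induction hf using Submonoid.closure_induction with
  | mem f hf => exact hf
  | one => exact ⟨∅, spinProd_empty⟩
  | mul f g _ _ hf hg =>
    obtain ⟨A, rfl⟩ := hf
    obtain ⟨B, rfl⟩ := hg
    exact ⟨A ∆ B, (spinProd_mul_spinProd A B).symm⟩

lemma exp_mul_spinProd_mem_nonnegSpinAlgebra {x : ℝ} (hx : 0 ≤ x) (A : Finset Λ) :
    (fun s => Real.exp (x * spinProd A s)) ∈ nonnegSpinAlgebra := by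
  have hexp : (fun s => Real.exp (x * spinProd A s)) =
      algebraMap ℝ≥0 _ (⟨Real.cosh x, (Real.cosh_pos x).le⟩ : ℝ≥0) +
        (⟨Real.sinh x, Real.sinh_nonneg_iff.mpr hx⟩ : ℝ≥0) • spinProd A := by
    funext s
    rw [exp_mul_spinProd]
    rfl
  rw [hexp]
  exact add_mem (Subalgebra.algebraMap_mem _ _)
    (Subalgebra.smul_mem _ (Algebra.subset_adjoin (Set.mem_range_self A)) _)

lemma sum_nonneg_of_mem_nonnegSpinAlgebra [Fintype Λ] [DecidableEq Λ] {f : (Λ → Bool) → ℝ} (hf : f ∈ nonnegSpinAlgebra) :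
    0 ≤ ∑ s, f s := by
  rw [nonnegSpinAlgebra, ← Subalgebra.mem_toSubmodule, Algebra.adjoin_eq_span] at hf
  induction hf using Submodule.span_induction with
  | mem f hf =>
    obtain ⟨A, rfl⟩ := mem_range_spinProd_of_mem_closure hf
    exact sum_spinProd_nonneg A
  | zero => simp
  | add f g _ _ hf hg => simpa [Finset.sum_add_distrib] using add_nonneg hf hg
  | smul c f _ hf => simpa [NNReal.smul_def, ← Finset.mul_sum] using mul_nonneg c.2 hf

lemma boltzmannWeight_mem_nonnegSpinAlgebra [Fintype Λ] {J : Finset Λ → ℝ} (hJ : ∀ R, 0 ≤ J R)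
    {β : ℝ} (hβ : 0 ≤ β) : (fun s => Real.exp (-β * isingHamiltonian J s)) ∈ nonnegSpinAlgebra := by
  have hfactor : (fun s => Real.exp (-β * isingHamiltonian J s)) =
      ∏ R, fun s => Real.exp (β * J R * spinProd R s) := by
    funext s
    simp only [Finset.prod_apply, ← Real.exp_sum, isingHamiltonian, neg_mul_neg, Finset.mul_sum,
      mul_assoc]
  rw [hfactor]
  exact Subalgebra.prod_mem _ fun R _ =>
    exp_mul_spinProd_mem_nonnegSpinAlgebra (mul_nonneg hβ (hJ R)) R

end Spins

/-- **First GKS inequality.** For a generalized Ising model with all couplings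
`J_R ≥ 0` on a finite spin set `Λ`, every correlation is nonnegative:
`⟨σ_A⟩ ≥ 0` for all `A ⊆ Λ`. -/
theorem gks_first_inequality {Λ : Type*} [Fintype Λ] [DecidableEq Λ]
    (J : Finset Λ → ℝ) (hJ : ∀ R, 0 ≤ J R) (β : ℝ) (hβ : 0 < β) (A : Finset Λ) :
    0 ≤ gibbsExpect β J (spinProd A) := by
  have hweight := boltzmannWeight_mem_nonnegSpinAlgebra hJ hβ.le
  refine div_nonneg ?_ (Finset.sum_nonneg fun s _ => (Real.exp_pos _).le)
  exact sum_nonneg_of_mem_nonnegSpinAlgebra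
    (mul_mem (Algebra.subset_adjoin (Set.mem_range_self A)) hweight)
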